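/- In a four-coloring of the patch partition such that patches sharing an edge (4-connected neighbors) receive different colors, the supports of the indicator basis functions within one color class are pairwise disjoint, so the energy F(u + Σ_{i∈I_k} c^i φ_j^i) decouples: minimizing over the vector (c^i)_{i∈I_k} is equivalent to minimizing each one-dimensional function F restricted to patch τ_j^i independently, provided F is a sum of per-pixel terms depending only on a local neighborhood contained within the patch and its fixed surroundings. -/

import Mathlib

/-!
Every pixel term of `F`, the fidelity term included, only sees `u` on the neighbourhood of its
pixel, and such a neighbourhood meets at most one patch of the colour class. Hence a pixel term
feels at most one of the corrections `c i • φ i`, so the energy change caused by all of them is the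
sum of the changes caused by each one alone. Minimizing a sum of functions of separate variables
is the same as minimizing each summand.
-/

open Finset Function Set

section Separable

variable {ι β M : Type*} [AddCommMonoid M] [PartialOrder M] [IsOrderedCancelAddMonoid M]

theorem forall_sum_le_sum_iff (I : Finset ι) (e : ι → β → M) (c : ι → β) :
    (∀ c' : ι → β, ∑ i ∈ I, e i (c i) ≤ ∑ i ∈ I, e i (c' i)) ↔
      ∀ i ∈ I, ∀ t, e i (c i) ≤ e i t := by
  classical
  refine ⟨fun h i hi t => ?_, fun h c' => sum_le_sum fun i hi => h i hi (c' i)⟩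
  have hupdate : ∑ j ∈ I, e j (update c i t j) = e i t + ∑ j ∈ I \ {i}, e j (c j) := by
    simp_rw [apply_update e c i t]
    exact sum_update_of_mem hi _ _
  have := h (update c i t)
  rwa [hupdate, ← add_sum_erase I _ hi, ← sdiff_singleton_eq_erase, add_le_add_iff_right] at this

end Separable

section Local

variable {Ω ι A B : Type*} [AddCommMonoid A] [AddCommGroup B]

theorem apply_add_sum_eq_of_local (G : (Ω → A) → B) (S : Set Ω)
    (hG : ∀ u v, EqOn u v S → G u = G v) (I : Finset ι) (v : ι → Ω → A)
    (hsep : ∀ i ∈ I, ∀ j ∈ I, (S ∩ support (v i)).Nonempty →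
      (S ∩ support (v j)).Nonempty → i = j) (u : Ω → A) :
    G (u + ∑ i ∈ I, v i) = G u + ∑ i ∈ I, (G (u + v i) - G u) := by
  have vanish {i} (hi : ¬(S ∩ support (v i)).Nonempty) {y} (hy : y ∈ S) : v i y = 0 :=
    notMem_support.1 fun hy' => hi ⟨y, hy, hy'⟩
  have unseen {i} (hi : ¬(S ∩ support (v i)).Nonempty) : G (u + v i) = G u :=
    hG _ _ fun y hy => by simp [vanish hi hy]
  by_cases hseen : ∃ i₀ ∈ I, (S ∩ support (v i₀)).Nonempty
  · obtain ⟨i₀, hi₀, hne⟩ := hseen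
    have others {i} (hi : i ∈ I) (hne' : i ≠ i₀) : ¬(S ∩ support (v i)).Nonempty :=
      fun h => hne' (hsep i hi i₀ hi₀ h hne)
    have hsum : ∑ i ∈ I, (G (u + v i) - G u) = G (u + v i₀) - G u :=
      sum_eq_single_of_mem i₀ hi₀ fun i hi hne' => by rw [unseen (others hi hne'), sub_self]
    have hfocus : G (u + ∑ i ∈ I, v i) = G (u + v i₀) := hG _ _ fun y hy => by
      simp only [Pi.add_apply, Finset.sum_apply]
      rw [sum_eq_single_of_mem i₀ hi₀ fun i hi hne' => vanish (others hi hne') hy]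
    rw [hsum, hfocus, add_sub_cancel]
  · have hnone {i} (hi : i ∈ I) : ¬(S ∩ support (v i)).Nonempty := fun h => hseen ⟨i, hi, h⟩
    have hfocus : G (u + ∑ i ∈ I, v i) = G u := hG _ _ fun y hy => by
      simp [Finset.sum_apply, sum_eq_zero fun i hi => vanish (hnone hi) hy]
    rw [hfocus, sum_eq_zero fun i hi => by rw [unseen (hnone hi), sub_self], add_zero]

theorem sum_apply_add_sum_eq_of_local [Fintype Ω] (h : (Ω → A) → Ω → B) (nbhd : Ω → Set Ω)
    (hlocal : ∀ u v x, EqOn u v (nbhd x) → h u x = h v x) (I : Finset ι) (v : ι → Ω → A)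
    (hsep : ∀ x, ∀ i ∈ I, ∀ j ∈ I, (nbhd x ∩ support (v i)).Nonempty →
      (nbhd x ∩ support (v j)).Nonempty → i = j) (u : Ω → A) :
    ∑ x, h (u + ∑ i ∈ I, v i) x =
      ∑ x, h u x + ∑ i ∈ I, (∑ x, h (u + v i) x - ∑ x, h u x) := by
  simp_rw [apply_add_sum_eq_of_local (h · _) (nbhd _) (fun u v huv => hlocal u v _ huv) I v
    (hsep _) u]
  rw [sum_add_distrib, sum_comm]
  simp only [sum_sub_distrib]

end Local

theorem four_color_decoupling_general (Ω : Type*) [Fintype Ω]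
    (g : (Ω → ℝ) → Ω → ℝ) (f : Ω → ℝ) (α : ℝ)
    (nbhd : Ω → Set Ω) (hself : ∀ x, x ∈ nbhd x)
    (hlocal : ∀ (u v : Ω → ℝ) (x : Ω), (∀ y ∈ nbhd x, u y = v y) → g u x = g v x)
    (N : ℕ) (τ : Fin N → Set Ω) [∀ i x, Decidable (x ∈ τ i)]
    (I : Finset (Fin N))
    (hsep : ∀ x : Ω, ∀ i ∈ I, ∀ i' ∈ I, (nbhd x ∩ τ i).Nonempty →
      (nbhd x ∩ τ i').Nonempty → i = i')
    (φ : Fin N → Ω → ℝ) (hφ : ∀ i x, φ i x = if x ∈ τ i then 1 else 0)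
    (F : (Ω → ℝ) → ℝ)
    (hF : ∀ u : Ω → ℝ, F u = ∑ x, g u x + α / 2 * ∑ x, (u x - f x) ^ 2)
    (u : Ω → ℝ) (c : Fin N → ℝ) :
    (∀ c' : Fin N → ℝ,
        F (u + ∑ i ∈ I, c i • φ i) ≤ F (u + ∑ i ∈ I, c' i • φ i)) ↔
      ∀ i ∈ I, ∀ t : ℝ, F (u + c i • φ i) ≤ F (u + t • φ i) := by
  set h : (Ω → ℝ) → Ω → ℝ := fun u x => g u x + α / 2 * (u x - f x) ^ 2
  have hF_sum (u) : F u = ∑ x, h u x := by rw [hF, sum_add_distrib, mul_sum]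
  have h_local (u v x) (huv : EqOn u v (nbhd x)) : h u x = h v x := by
    simp only [h, hlocal u v x huv, huv (hself x)]
  have hsupport (c' : Fin N → ℝ) (i) : support (c' i • φ i) ⊆ τ i := fun x hx => by
    by_contra hxτ
    simp [hφ, hxτ] at hx
  have hsplit (c' : Fin N → ℝ) :
      F (u + ∑ i ∈ I, c' i • φ i) = F u + ∑ i ∈ I, (F (u + c' i • φ i) - F u) := by
    simp only [hF_sum]
    exact sum_apply_add_sum_eq_of_local h nbhd h_local I _ (fun x i hi j hj hi' hj' =>
      hsep x i hi j hj (hi'.mono (inter_subset_inter_right _ (hsupport c' i)))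
        (hj'.mono (inter_subset_inter_right _ (hsupport c' j)))) u
  simp only [hsplit, add_le_add_iff_left]
  simpa only [sub_le_sub_iff_right] using
    forall_sum_le_sum_iff I (fun i t => F (u + t • φ i) - F u) c

/-- Four-coloring decoupling: for non-adjacent disjoint patches within one
color class (each local neighborhood meets at most one patch of the class),
minimizing the energy over the vector of patch corrections is equivalent to
minimizing each one-dimensional patch problem independently. -/
theorem four_color_decoupling (Ω : Type*) [Fintype Ω] [DecidableEq Ω]
    (g : (Ω → ℝ) → Ω → ℝ) (f : Ω → ℝ) (α : ℝ) (hα : 0 < α)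
    (nbhd : Ω → Set Ω) (hself : ∀ x, x ∈ nbhd x)
    (hlocal : ∀ (u v : Ω → ℝ) (x : Ω), (∀ y ∈ nbhd x, u y = v y) → g u x = g v x)
    (N : ℕ) (τ : Fin N → Set Ω) [∀ i x, Decidable (x ∈ τ i)]
    (I : Finset (Fin N))
    (hdisj : ∀ i ∈ I, ∀ i' ∈ I, i ≠ i' → Disjoint (τ i) (τ i'))
    (hsep : ∀ x : Ω, ∀ i ∈ I, ∀ i' ∈ I, (nbhd x ∩ τ i).Nonempty →
      (nbhd x ∩ τ i').Nonempty → i = i')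
    (φ : Fin N → Ω → ℝ) (hφ : ∀ i x, φ i x = if x ∈ τ i then 1 else 0)
    (F : (Ω → ℝ) → ℝ)
    (hF : ∀ u : Ω → ℝ, F u = ∑ x, g u x + α / 2 * ∑ x, (u x - f x) ^ 2)
    (u : Ω → ℝ) (c : Fin N → ℝ) :
    (∀ c' : Fin N → ℝ,
        F (u + ∑ i ∈ I, c i • φ i) ≤ F (u + ∑ i ∈ I, c' i • φ i)) ↔
      ∀ i ∈ I, ∀ t : ℝ, F (u + c i • φ i) ≤ F (u + t • φ i) :=
  four_color_decoupling_general Ω g f α nbhd hself hlocal N τ I hsep φ hφ F hF u c
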